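/- arXiv:1710.10790 — 5 statements merged into one kernel-verified Lean document; each statement's English description precedes it below -/
import Mathlib

section
/- Let r = δ - 2 with δ ∈ (0, 1/4], and N ≥ 100 an integer. With α defined by 1/α = ∑_{n=1}^N n^r, one has α ∑_{n=1}^N n^{r+1} ≥ (N^δ - 1)(δ - 1) / ((N^{δ-1} + δ - 2)·δ), and since |δ-1| ≥ 3/4 and |N^{δ-1} + δ - 2| ≤ 2, this is at least (3/(8δ))(N^δ - 1). -/
open Set MeasureTheory intervalIntegral

-- sum over Icc 1 N as sum over range N
lemma sum_Icc_one (N : ℕ) (f : ℕ → ℝ) :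
    ∑ n ∈ Finset.Icc 1 N, f n = ∑ i ∈ Finset.range N, f (1 + i) := by
  rw [← Finset.Ico_add_one_right_eq_Icc, Finset.sum_Ico_eq_sum_range]
  simp

lemma antitone_rpow (s : ℝ) (hs : s ≤ 0) (c : ℝ) :
    AntitoneOn (fun x : ℝ => x ^ s) (Icc 1 c) := by
  intro x hx y hy hxy
  exact Real.rpow_le_rpow_of_nonpos (lt_of_lt_of_le one_pos hx.1) hxy hs

-- lower bound for the antitone sum by the integral
lemma integral_le_sum_Icc (N : ℕ) (hN : 1 ≤ N) (s : ℝ) (hs : s < 0) (hs1 : s ≠ -1) :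
    ((N : ℝ) ^ (s + 1) - 1) / (s + 1) ≤ ∑ n ∈ Finset.Icc 1 N, (n : ℝ) ^ s := by
  have hNR : (1 : ℝ) ≤ (N : ℝ) := by exact_mod_cast hN
  have key : (∫ x in (1 : ℝ)..(1 + (N - 1 : ℕ)), x ^ s)
      ≤ ∑ i ∈ Finset.range (N - 1), ((1 : ℝ) + (i : ℕ)) ^ s :=
    AntitoneOn.integral_le_sum (f := fun x => x ^ s) (antitone_rpow s hs.le _)
  have hcast : (1 : ℝ) + ((N - 1 : ℕ) : ℝ) = (N : ℝ) := by
    have : ((N - 1 : ℕ) : ℝ) = (N : ℝ) - 1 := by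
      push_cast [Nat.cast_sub hN]; ring
    rw [this]; ring
  rw [hcast] at key
  rw [integral_rpow (Or.inr ⟨hs1, by
    rw [uIcc_of_le hNR]; intro h; exact absurd h.1 (by norm_num)⟩)] at key
  calc ((N : ℝ) ^ (s + 1) - 1) / (s + 1)
      = ((N:ℝ) ^ (s + 1) - (1:ℝ) ^ (s+1)) / (s + 1) := by rw [Real.one_rpow]
    _ ≤ ∑ i ∈ Finset.range (N - 1), ((1 : ℝ) + (i : ℕ)) ^ s := key
    _ ≤ ∑ n ∈ Finset.Icc 1 N, (n : ℝ) ^ s := by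
        rw [sum_Icc_one]
        have hNsplit : N = (N - 1) + 1 := (Nat.succ_pred_eq_of_pos hN).symm
        rw [hNsplit, Finset.sum_range_succ]
        have : (0:ℝ) ≤ ((1 + (N-1) : ℕ) : ℝ) ^ s :=
          Real.rpow_nonneg (by positivity) s
        push_cast
        push_cast at this
        nlinarith [this]

-- upper bound for the antitone sum
lemma sum_le_integral_Icc (N : ℕ) (hN : 1 ≤ N) (s : ℝ) (hs : s < 0) (hs1 : s ≠ -1) :
    ∑ n ∈ Finset.Icc 1 N, (n : ℝ) ^ s ≤ 1 + ((N : ℝ) ^ (s + 1) - 1) / (s + 1) := by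
  have hNR : (1 : ℝ) ≤ (N : ℝ) := by exact_mod_cast hN
  have key : (∑ i ∈ Finset.range (N-1), ((1:ℝ) + ((i + 1 : ℕ) : ℝ)) ^ s)
      ≤ ∫ x in (1 : ℝ)..(1 + (N - 1 : ℕ)), x ^ s :=
    AntitoneOn.sum_le_integral (f := fun x => x ^ s) (antitone_rpow s hs.le _)
  have hcast : (1 : ℝ) + ((N - 1 : ℕ) : ℝ) = (N : ℝ) := by
    have : ((N - 1 : ℕ) : ℝ) = (N : ℝ) - 1 := by
      push_cast [Nat.cast_sub hN]; ring
    rw [this]; ring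
  rw [hcast] at key
  rw [integral_rpow (Or.inr ⟨hs1, by
    rw [uIcc_of_le hNR]; intro h; exact absurd h.1 (by norm_num)⟩)] at key
  rw [Real.one_rpow] at key
  have hsum : ∑ n ∈ Finset.Icc 1 N, (n : ℝ) ^ s
      = (∑ i ∈ Finset.range (N-1), ((1:ℝ) + ((i + 1 : ℕ) : ℝ)) ^ s) + 1 := by
    rw [sum_Icc_one]
    conv_lhs => rw [show N = (N-1)+1 from (Nat.succ_pred_eq_of_pos hN).symm]
    rw [Finset.sum_range_succ']
    push_cast
    rw [Real.one_rpow]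
  rw [hsum]
  linarith [key]

/-- The key lower-bound chain in Theorem 2 for the classical complexity. -/
theorem classical_bound_chain (N : ℕ) (hN : 100 ≤ N)
    (δ : ℝ) (hδ0 : 0 < δ) (hδ1 : δ ≤ 1 / 4)
    (r : ℝ) (hr : r = δ - 2)
    (α : ℝ) (hα : 1 / α = ∑ n ∈ Finset.Icc 1 N, (n : ℝ) ^ r) :
    ((N : ℝ) ^ δ - 1) * (δ - 1) / (((N : ℝ) ^ (δ - 1) + δ - 2) * δ) ≤
      α * ∑ n ∈ Finset.Icc 1 N, (n : ℝ) ^ (r + 1) ∧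
    (3 / (8 * δ)) * ((N : ℝ) ^ δ - 1) ≤
      ((N : ℝ) ^ δ - 1) * (δ - 1) / (((N : ℝ) ^ (δ - 1) + δ - 2) * δ) := by
  subst hr
  have e1 : δ - 2 + 1 = δ - 1 := by ring
  rw [e1]
  have hN1 : (1 : ℝ) < (N : ℝ) := by
    have : (1:ℕ) < N := by omega
    exact_mod_cast this
  have hN0 : (0 : ℝ) < (N : ℝ) := by linarith
  have hNδ : 1 < (N : ℝ) ^ δ := (Real.one_lt_rpow_iff_of_pos hN0).mpr (Or.inl ⟨hN1, hδ0⟩)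
  have hx : (0:ℝ) < (N : ℝ) ^ δ - 1 := by linarith
  have hNδ1lt : (N : ℝ) ^ (δ - 1) < 1 :=
    Real.rpow_lt_one_of_one_lt_of_neg hN1 (by linarith)
  have hNδ1pos : (0:ℝ) < (N : ℝ) ^ (δ - 1) := Real.rpow_pos_of_pos hN0 _
  set D : ℝ := (N : ℝ) ^ (δ - 1) + δ - 2 with hDdef
  have hDneg : D < 0 := by rw [hDdef]; linarith
  have hDgt : -2 < D := by rw [hDdef]; linarith
  have hδ1' : δ - 1 < 0 := by linarith
  set B : ℝ := ∑ n ∈ Finset.Icc 1 N, (n : ℝ) ^ (δ - 2) with hBdef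
  set A : ℝ := ∑ n ∈ Finset.Icc 1 N, (n : ℝ) ^ (δ - 1) with hAdef
  have hBpos : 0 < B := by
    rw [hBdef]
    apply Finset.sum_pos
    · intro n hn
      have : 0 < n := by
        have := (Finset.mem_Icc.mp hn).1; omega
      exact Real.rpow_pos_of_pos (by exact_mod_cast this) _
    · exact ⟨1, Finset.mem_Icc.mpr ⟨le_refl 1, by omega⟩⟩
  have hAnn : 0 ≤ A := by
    rw [hAdef]
    exact Finset.sum_nonneg fun n _ => Real.rpow_nonneg (Nat.cast_nonneg n) _
  -- lower bound on A
  have hA : ((N : ℝ) ^ δ - 1) / δ ≤ A := by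
    have h := integral_le_sum_Icc N (by omega) (δ - 1) (by linarith) (by intro h; nlinarith)
    have e2 : δ - 1 + 1 = δ := by ring
    rw [e2] at h
    exact h
  -- upper bound on B
  have hB : B ≤ D / (δ - 1) := by
    have h := sum_le_integral_Icc N (by omega) (δ - 2) (by linarith) (by intro h; nlinarith)
    rw [e1] at h
    have e3 : 1 + ((N : ℝ) ^ (δ - 1) - 1) / (δ - 1) = D / (δ - 1) := by
      have hδ1ne : δ - 1 ≠ 0 := hδ1'.ne
      rw [hDdef]; field_simp; ring
    rw [e3] at h
    exact h
  have hCpos : 0 < D / (δ - 1) := div_pos_of_neg_of_neg hDneg hδ1'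
  have hαval : α = 1 / B := by
    have hα0 : α ≠ 0 := by
      intro h; rw [h, one_div, inv_zero] at hα; linarith [hBpos]
    rw [eq_div_iff hBpos.ne']
    rw [← hα]
    field_simp
  constructor
  · rw [hαval, one_div, ← div_eq_inv_mul]
    have hEq : ((N : ℝ) ^ δ - 1) * (δ - 1) / (D * δ) =
        (((N : ℝ) ^ δ - 1) / δ) / (D / (δ - 1)) := by
      have hDne : D ≠ 0 := hDneg.ne
      have hδne : δ ≠ 0 := hδ0.ne'
      have hδ1ne : δ - 1 ≠ 0 := hδ1'.ne
      field_simp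
    rw [hEq]
    exact div_le_div₀ hAnn hA hBpos hB
  · have hDδ : D * δ < 0 := mul_neg_of_neg_of_pos hDneg hδ0
    rw [le_div_iff_of_neg hDδ]
    have h38 : 3 / (8 * δ) * ((N : ℝ) ^ δ - 1) * (D * δ) = 3 * (((N : ℝ) ^ δ - 1) * D) / 8 := by
      field_simp
    rw [h38]
    have k1 : ((N : ℝ) ^ δ - 1) * (-2) ≤ ((N : ℝ) ^ δ - 1) * D :=
      mul_le_mul_of_nonneg_left hDgt.le hx.le
    nlinarith [k1, hx]
end

section
/- Define G(r, p, ε) = (200/(1-ε))·(1.04 + r·p + √r)·log(1/ε) for r ≥ 0, p ∈ [0,1], ε ∈ (0, 1/2]. Then for any positive integer n, ∑_{i=0}^{⌊log n⌋ + 1} G(e^i, p, ε) ≤ ∫_0^{log(n)+2} G(e^s, p, ε) ds ≤ e^2 · G(n, p, ε). -/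
/-!
The function `s ↦ G (e^s) p ε` is nonnegative and monotone, so its values at the integers
`0, …, ⌊log n⌋ + 1` are bounded by its integral over `[0, log n + 2]`. Writing
`G (e^s) = C (1.04 + p e^s + e^{s/2})` with
`C = 200 log (1/ε) / (1 - ε) ≥ 0`, the integral up to `T` is
`C (1.04 T + p (e^T - 1) + 2 (e^{T/2} - 1))`; at `T = log n + 2` we have `e^T = e² n` and
`e^{T/2} = e √n`, and the remaining term `1.04 log n` is absorbed using `e log n ≤ 2 √n`.
-/

noncomputable def G (r p ε : ℝ) : ℝ :=
  (200 / (1 - ε)) * (1.04 + r * p + Real.sqrt r) * Real.log (1 / ε)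

open Real Finset intervalIntegral

theorem Monotone.sum_range_le_integral {f : ℝ → ℝ} (hf : Monotone f) (hf0 : 0 ≤ f 0)
    {m : ℕ} {T : ℝ} (hmT : (m : ℝ) ≤ T) :
    ∑ i ∈ range m, f i ≤ ∫ x in (0 : ℝ)..T, f x := by
  calc ∑ i ∈ range m, f i = ∑ i ∈ range m, f (0 + i) := by simp only [zero_add]
    _ ≤ ∫ x in (0 : ℝ)..0 + m, f x := (hf.monotoneOn _).sum_le_integral
    _ ≤ ∫ x in (0 : ℝ)..T, f x := by
      refine integral_mono_interval le_rfl (by positivity) (by rwa [zero_add]) ?_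
        hf.intervalIntegrable
      exact MeasureTheory.ae_restrict_of_forall_mem measurableSet_Ioc fun x hx =>
        hf0.trans (hf hx.1.le)

theorem exp_one_mul_log_le_two_mul_sqrt {x : ℝ} (hx : 0 < x) : exp 1 * log x ≤ 2 * √x := by
  have h := exp_one_mul_le_exp (x := log √x)
  rw [exp_log (sqrt_pos.2 hx), log_sqrt hx.le] at h
  linarith

theorem G_eq_mul (r p ε : ℝ) :
    G r p ε = 200 / (1 - ε) * log (1 / ε) * (1.04 + r * p + √r) := by
  rw [G]; ring

theorem G_exp (s p ε : ℝ) :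
    G (exp s) p ε = 200 / (1 - ε) * log (1 / ε) * (1.04 + p * exp s + exp (s / 2)) := by
  rw [G_eq_mul, exp_half]; ring

section

variable {p ε : ℝ}

theorem G_coeff_nonneg (hε0 : 0 < ε) (hε1 : ε < 1) : 0 ≤ 200 / (1 - ε) * log (1 / ε) :=
  mul_nonneg (div_nonneg (by norm_num) (by linarith)) (log_nonneg (one_le_one_div hε0 hε1.le))

theorem G_nonneg {r : ℝ} (hr : 0 ≤ r) (hp : 0 ≤ p) (hε0 : 0 < ε) (hε1 : ε < 1) :
    0 ≤ G r p ε := by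
  rw [G_eq_mul]
  exact mul_nonneg (G_coeff_nonneg hε0 hε1) (by positivity)

theorem monotoneOn_G (hp : 0 ≤ p) (hε0 : 0 < ε) (hε1 : ε < 1) :
    MonotoneOn (fun r => G r p ε) (Set.Ici 0) := by
  intro r _ t _ hrt
  simp only [G_eq_mul]
  have := G_coeff_nonneg hε0 hε1
  gcongr

theorem monotone_G_exp (hp : 0 ≤ p) (hε0 : 0 < ε) (hε1 : ε < 1) :
    Monotone fun s => G (exp s) p ε := fun s t hst =>
  monotoneOn_G hp hε0 hε1 (exp_pos s).le (exp_pos t).le (exp_le_exp.2 hst)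

end

theorem integral_G_exp (p ε T : ℝ) :
    ∫ s in (0 : ℝ)..T, G (exp s) p ε =
      200 / (1 - ε) * log (1 / ε) * (1.04 * T + p * (exp T - 1) + 2 * (exp (T / 2) - 1)) := by
  simp only [G_exp, integral_const_mul]
  congr 1
  have hderiv (s : ℝ) : HasDerivAt (fun s => 1.04 * s + p * exp s + 2 * exp (s / 2))
      (1.04 + p * exp s + exp (s / 2)) s := by
    have h := (((hasDerivAt_id' s).const_mul 1.04).add ((hasDerivAt_exp s).const_mul p)).add
      ((((hasDerivAt_id' s).div_const 2).exp).const_mul 2)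
    exact h.congr_deriv (by ring)
  rw [integral_eq_sub_of_hasDerivAt (fun s _ => hderiv s)
    (Continuous.intervalIntegrable (by fun_prop) _ _)]
  simp only [exp_zero, zero_div]
  ring

theorem primitive_le_exp_two_mul {p x : ℝ} (hp : 0 ≤ p) (hx : 0 < x) :
    1.04 * (log x + 2) + p * (exp (log x + 2) - 1) + 2 * (exp ((log x + 2) / 2) - 1) ≤
      exp 2 * (1.04 + x * p + √x) := by
  have hexp : exp (log x + 2) = exp 1 * exp 1 * x := by
    rw [exp_add, exp_log hx, ← exp_add]; norm_num; ring
  have hexp_half : exp ((log x + 2) / 2) = exp 1 * √x := by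
    rw [add_div, exp_add, ← log_sqrt hx.le, exp_log (sqrt_pos.2 hx)]; norm_num; ring
  have h2 : exp 2 = exp 1 * exp 1 := by rw [← exp_add]; norm_num
  -- `e log x ≤ 2 √x` absorbs `1.04 log x` into the `√x` terms, as `2.08 / e + 2 e ≤ e²`.
  have hlog := exp_one_mul_log_le_two_mul_sqrt hx
  have he := exp_one_gt_d9
  have hs := sqrt_nonneg x
  rw [hexp, hexp_half, h2]
  nlinarith [mul_nonneg hs (by linarith : (0 : ℝ) ≤ exp 1 - 2.7182818283)]

theorem sum_le_integral_le_e_sq_G_general (p ε : ℝ) (hp0 : 0 ≤ p)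
    (hε0 : 0 < ε) (hε1 : ε ≤ 1 / 2) (n : ℕ) (hn : 0 < n) :
    (∑ i ∈ Finset.range (⌊Real.log n⌋₊ + 2), G (Real.exp i) p ε) ≤
      (∫ s in (0 : ℝ)..(Real.log n + 2), G (Real.exp s) p ε) ∧
    (∫ s in (0 : ℝ)..(Real.log n + 2), G (Real.exp s) p ε) ≤
      Real.exp 2 * G n p ε := by
  have hε1' : ε < 1 := by linarith
  constructor
  · refine (monotone_G_exp hp0 hε0 hε1').sum_range_le_integral
      (G_nonneg (exp_pos 0).le hp0 hε0 hε1') ?_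
    have := Nat.floor_le (log_natCast_nonneg n)
    push_cast
    linarith
  · rw [integral_G_exp, G_eq_mul, mul_left_comm]
    exact mul_le_mul_of_nonneg_left (primitive_le_exp_two_mul hp0 (by exact_mod_cast hn))
      (G_coeff_nonneg hε0 hε1')

/-- Integral comparison step bounding the expected query count of geometric
quantum search: ∑_{i=0}^{⌊log n⌋+1} G(e^i,p,ε) ≤ ∫_0^{log n + 2} G(e^s,p,ε) ds
≤ e^2 G(n,p,ε). -/
theorem sum_le_integral_le_e_sq_G (p ε : ℝ) (hp0 : 0 ≤ p) (hp1 : p ≤ 1)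
    (hε0 : 0 < ε) (hε1 : ε ≤ 1 / 2) (n : ℕ) (hn : 0 < n) :
    (∑ i ∈ Finset.range (⌊Real.log n⌋₊ + 2), G (Real.exp i) p ε) ≤
      (∫ s in (0 : ℝ)..(Real.log n + 2), G (Real.exp s) p ε) ∧
    (∫ s in (0 : ℝ)..(Real.log n + 2), G (Real.exp s) p ε) ≤
      Real.exp 2 * G n p ε :=
  sum_le_integral_le_e_sq_G_general p ε hp0 hε0 hε1 n hn
end

section
/- Let N ≥ 100 be an integer, δ ∈ (0, 1/4], r = δ - 2, and p ∈ [0,1]. Define α by 1/α = ∑_{n=1}^N n^r and G(x) = 1.04 + p·x + √x. Then α·( G(1) + ∫_1^N x^r G(x) dx ) ≤ 1.04 + 1.04·(7.04 + p(N^δ - 1)/δ ). -/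
/-- Key estimate in Theorem 2 bounding the μ-weighted average of G. -/
theorem weighted_G_estimate (N : ℕ) (hN : 100 ≤ N)
    (δ : ℝ) (hδ0 : 0 < δ) (hδ1 : δ ≤ 1 / 4) (r : ℝ) (hr : r = δ - 2)
    (p : ℝ) (hp0 : 0 ≤ p) (hp1 : p ≤ 1)
    (α : ℝ) (hα : 1 / α = ∑ n ∈ Finset.Icc 1 N, (n : ℝ) ^ r) :
    α * ((1.04 + p * 1 + Real.sqrt 1) +
        ∫ x in (1 : ℝ)..(N : ℝ), x ^ r * (1.04 + p * x + Real.sqrt x)) ≤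
      1.04 + 1.04 * (7.04 + p * ((N : ℝ) ^ δ - 1) / δ) := by
  have hN1 : (1 : ℝ) ≤ (N : ℝ) := by
    have : (1 : ℕ) ≤ N := by omega
    exact_mod_cast this
  have h0mem : (0 : ℝ) ∉ Set.uIcc (1 : ℝ) (N : ℝ) := by
    rw [Set.uIcc_of_le hN1]
    intro h
    linarith [h.1]
  -- lower bound on the sum
  have hsum_lb : (5 : ℝ) / 4 ≤ ∑ n ∈ Finset.Icc 1 N, (n : ℝ) ^ r := by
    have hsub : ({1, 2} : Finset ℕ) ⊆ Finset.Icc 1 N := by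
      intro n hn
      simp only [Finset.mem_insert, Finset.mem_singleton] at hn
      rcases hn with h | h <;> simp [h, Finset.mem_Icc] <;> omega
    have hnonneg : ∀ n ∈ Finset.Icc 1 N, n ∉ ({1, 2} : Finset ℕ) → 0 ≤ (n : ℝ) ^ r :=
      fun n _ _ => Real.rpow_nonneg (by positivity) r
    have hle := Finset.sum_le_sum_of_subset_of_nonneg hsub hnonneg
    have hpair : ∑ n ∈ ({1, 2} : Finset ℕ), (n : ℝ) ^ r = 1 + (2 : ℝ) ^ r := by
      rw [Finset.sum_pair (by norm_num)]
      norm_num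
    have h2r : (1 : ℝ) / 4 ≤ (2 : ℝ) ^ r := by
      have h := Real.rpow_le_rpow_of_exponent_le (by norm_num : (1:ℝ) ≤ 2)
        (show (-2 : ℝ) ≤ r by rw [hr]; linarith)
      rw [show ((-2 : ℝ)) = ((-2 : ℤ) : ℝ) by norm_num, Real.rpow_intCast] at h
      norm_num at h
      linarith
    calc (5 : ℝ) / 4 ≤ 1 + (2 : ℝ) ^ r := by linarith
      _ = ∑ n ∈ ({1, 2} : Finset ℕ), (n : ℝ) ^ r := hpair.symm
      _ ≤ _ := hle
  have hα_pos : 0 < α := by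
    have : 0 < 1 / α := by rw [hα]; linarith
    exact one_div_pos.mp this
  have hα_ub : α ≤ 4 / 5 := by
    have h1 : (5 : ℝ) / 4 ≤ 1 / α := by rw [hα]; exact hsum_lb
    have := one_div_le_one_div_of_le (by norm_num : (0:ℝ) < 5/4) h1
    simpa using this
  have hNpos : (0 : ℝ) < (N : ℝ) := by linarith
  -- rewrite the integrand
  have hcong : Set.EqOn (fun x : ℝ => x ^ r * (1.04 + p * x + Real.sqrt x))
      (fun x : ℝ => 1.04 * x ^ (δ - 2) + p * x ^ (δ - 1) + x ^ (δ - 3/2))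
      (Set.uIcc (1 : ℝ) (N : ℝ)) := by
    intro x hx
    rw [Set.uIcc_of_le hN1] at hx
    have hx0 : (0 : ℝ) < x := lt_of_lt_of_le one_pos hx.1
    have hx1 : x ^ r * x = x ^ (δ - 1) := by
      rw [← Real.rpow_add_one hx0.ne' r]
      congr 1
      rw [hr]; ring
    have hx2 : x ^ r * Real.sqrt x = x ^ (δ - 3/2) := by
      rw [Real.sqrt_eq_rpow, ← Real.rpow_add hx0]
      congr 1
      rw [hr]; ring
    show x ^ r * (1.04 + p * x + Real.sqrt x) = _
    calc x ^ r * (1.04 + p * x + Real.sqrt x)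
        = 1.04 * x ^ r + p * (x ^ r * x) + x ^ r * Real.sqrt x := by ring
      _ = 1.04 * x ^ (δ - 2) + p * x ^ (δ - 1) + x ^ (δ - 3/2) := by rw [hx1, hx2, hr]
  have hint : (∫ x in (1 : ℝ)..(N : ℝ), x ^ r * (1.04 + p * x + Real.sqrt x)) =
      1.04 * (((N:ℝ) ^ (δ - 1) - 1) / (δ - 1)) + p * (((N:ℝ) ^ δ - 1) / δ) +
        (((N:ℝ) ^ (δ - 1/2) - 1) / (δ - 1/2)) := by
    rw [intervalIntegral.integral_congr hcong]
    have i1 : IntervalIntegrable (fun x : ℝ => x ^ (δ - 2)) MeasureTheory.volume 1 N :=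
      intervalIntegral.intervalIntegrable_rpow (Or.inr h0mem)
    have i2 : IntervalIntegrable (fun x : ℝ => x ^ (δ - 1)) MeasureTheory.volume 1 N :=
      intervalIntegral.intervalIntegrable_rpow (Or.inr h0mem)
    have i3 : IntervalIntegrable (fun x : ℝ => x ^ (δ - 3/2)) MeasureTheory.volume 1 N :=
      intervalIntegral.intervalIntegrable_rpow (Or.inr h0mem)
    rw [intervalIntegral.integral_add ((i1.const_mul _).add (i2.const_mul _)) i3,
        intervalIntegral.integral_add (i1.const_mul _) (i2.const_mul _),
        intervalIntegral.integral_const_mul, intervalIntegral.integral_const_mul,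
        integral_rpow (Or.inr ⟨by intro h; linarith, h0mem⟩),
        integral_rpow (Or.inl (by linarith)),
        integral_rpow (Or.inr ⟨by intro h; linarith, h0mem⟩),
        show δ - 2 + 1 = δ - 1 by ring, show δ - 1 + 1 = δ by ring,
        show δ - 3/2 + 1 = δ - 1/2 by ring]
    norm_num
  rw [hint, Real.sqrt_one]
  -- bounds on pieces
  have hNd1 : (N : ℝ) ^ (δ - 1) ≤ 1 :=
    Real.rpow_le_one_of_one_le_of_nonpos hN1 (by linarith)
  have hNd1' : 0 ≤ (N : ℝ) ^ (δ - 1) := Real.rpow_nonneg (le_of_lt hNpos) _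
  have hNd2 : (N : ℝ) ^ (δ - 1/2) ≤ 1 :=
    Real.rpow_le_one_of_one_le_of_nonpos hN1 (by linarith)
  have hNd2' : 0 ≤ (N : ℝ) ^ (δ - 1/2) := Real.rpow_nonneg (le_of_lt hNpos) _
  have hNd3 : 1 ≤ (N : ℝ) ^ δ := Real.one_le_rpow hN1 (le_of_lt hδ0)
  clear hα hsum_lb hcong hint h0mem
  generalize ha : (N : ℝ) ^ (δ - 1) = a at hNd1 hNd1' ⊢
  generalize hb : (N : ℝ) ^ δ = b at hNd3 ⊢
  generalize hc : (N : ℝ) ^ (δ - 1/2) = c at hNd2 hNd2' ⊢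
  have hI1eq : (a - 1) / (δ - 1) = (1 - a) / (1 - δ) := by
    rw [show (1 - a) = -(a - 1) by ring, show (1 - δ) = -(δ - 1) by ring, neg_div_neg_eq]
  have hI3eq : (c - 1) / (δ - 1/2) = (1 - c) / (1/2 - δ) := by
    rw [show (1 - c) = -(c - 1) by ring, show (1/2 - δ) = -(δ - 1/2) by ring, neg_div_neg_eq]
  have hI1a : 0 ≤ (a - 1) / (δ - 1) := by
    rw [hI1eq]; apply div_nonneg <;> linarith
  have hI1b : (a - 1) / (δ - 1) ≤ 4 / 3 := by
    rw [hI1eq, div_le_iff₀ (by linarith : (0:ℝ) < 1 - δ)]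
    nlinarith
  have hI2a : 0 ≤ (b - 1) / δ := div_nonneg (by linarith) (le_of_lt hδ0)
  have hI3a : 0 ≤ (c - 1) / (δ - 1/2) := by
    rw [hI3eq]; apply div_nonneg <;> linarith
  have hI3b : (c - 1) / (δ - 1/2) ≤ 4 := by
    rw [hI3eq, div_le_iff₀ (by linarith : (0:ℝ) < 1/2 - δ)]
    nlinarith
  set I1 : ℝ := (a - 1) / (δ - 1) with hI1
  set I2 : ℝ := (b - 1) / δ with hI2
  set I3 : ℝ := (c - 1) / (δ - 1/2) with hI3
  have hpI2 : 0 ≤ p * I2 := mul_nonneg hp0 hI2a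
  have hm1 : (0:ℝ) ≤ 1.04 * I1 := mul_nonneg (by norm_num) hI1a
  have hm2 : (1.04 : ℝ) * I1 ≤ 1.04 * (4/3) :=
    mul_le_mul_of_nonneg_left hI1b (by norm_num)
  have hB0 : (0:ℝ) ≤ 1.04 + p * 1 + 1 + (1.04 * I1 + I3) := by linarith
  have hBub : 1.04 + p * 1 + 1 + (1.04 * I1 + I3) ≤ 10.44 := by linarith
  have expand : α * (1.04 + p * 1 + 1 + (1.04 * I1 + p * I2 + I3)) =
      α * (1.04 + p * 1 + 1 + (1.04 * I1 + I3)) + α * (p * I2) := by ring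
  have h1 : α * (1.04 + p * 1 + 1 + (1.04 * I1 + I3)) ≤ (4/5) * 10.44 := by
    have t1 := mul_le_mul hα_ub hBub hB0 (by norm_num : (0:ℝ) ≤ 4/5)
    linarith
  have h2 : α * (p * I2) ≤ p * I2 := by
    calc α * (p * I2) ≤ 1 * (p * I2) :=
          mul_le_mul_of_nonneg_right (by linarith) hpI2
      _ = p * I2 := one_mul _
  calc α * (1.04 + p * 1 + 1 + (1.04 * I1 + p * I2 + I3))
      ≤ (4/5) * 10.44 + p * I2 := by rw [expand]; linarith
    _ ≤ 1.04 + 1.04 * (7.04 + p * I2) := by linarith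
    _ = 1.04 + 1.04 * (7.04 + p * (b - 1) / δ) := by rw [hI2]; ring
end

section
/- Let N ≥ 100 be an integer, δ ∈ (0, 1/4], r = δ - 2, p ∈ [0,1], ε ∈ (0, 1/2], and μ_n = α n^r with 1/α = ∑_{n=1}^N n^r. Suppose a quantity T satisfies T ≤ e^2 ∑_{n=1}^N μ_n G(n, p, ε), where G(x,p,ε) = (200/(1-ε))(1.04 + xp + √x)log(1/ε). Then, with ε = 1/2, T ≤ 400 e^2 (9 + 1.04·p·(N^δ - 1)/δ). -/
open Finset Real

private lemma qb_telescope (f : ℕ → ℝ) : ∀ N, 1 ≤ N →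
    ∑ n ∈ Finset.Icc 2 N, (f n - f (n - 1)) = f N - f 1 := by
  intro N hN
  induction N, hN using Nat.le_induction with
  | base => simp
  | succ n hn ih =>
    rw [Finset.sum_Icc_succ_top (by omega), ih]
    simp only [Nat.add_sub_cancel]
    ring

/-- Bernoulli-type: for `x ≥ 2` and `0 < c ≤ 1`, `c * x^(c-1) ≤ x^c - (x-1)^c`. -/
private lemma qb_concave {x c : ℝ} (hx : 2 ≤ x) (hc0 : 0 < c) (hc1 : c ≤ 1) :
    c * x ^ (c - 1) ≤ x ^ c - (x - 1) ^ c := by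
  have hx0 : 0 < x := by linarith
  have h1 : (0:ℝ) ≤ 1 - 1/x := by
    have : 1/x ≤ 1/2 := by
      rw [div_le_div_iff₀ hx0 (by norm_num)]; linarith
    linarith
  have key : (1 - 1/x) ^ c ≤ 1 - c/x := by
    have := rpow_one_add_le_one_add_mul_self (s := -(1/x)) (by
      have : 1/x ≤ 1 := by
        rw [div_le_one hx0]; linarith
      linarith) hc0.le hc1
    have h2 : 1 + -(1/x) = 1 - 1/x := by ring
    have h3 : 1 + c * -(1/x) = 1 - c/x := by ring
    rw [h2, h3] at this
    exact this
  have hfac : x - 1 = x * (1 - 1/x) := by field_simp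
  have hmul : (x - 1) ^ c = x ^ c * (1 - 1/x) ^ c := by
    rw [hfac, Real.mul_rpow hx0.le h1]
  have hxc : 0 < x ^ c := Real.rpow_pos_of_pos hx0 _
  have hsub : x ^ (c - 1) = x ^ c / x := by
    rw [Real.rpow_sub hx0, Real.rpow_one]
  have : (x - 1) ^ c ≤ x ^ c * (1 - c/x) := by
    rw [hmul]
    exact mul_le_mul_of_nonneg_left key hxc.le
  have hexp : x ^ c * (1 - c/x) = x ^ c - c * (x ^ c / x) := by
    field_simp
  rw [hsub]
  rw [hexp] at this
  linarith

/-- For `x ≥ 2`: `x^(-5/4) ≤ 4 * ((x-1)^(-1/4) - x^(-1/4))`. -/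
private lemma qb_convex {x : ℝ} (hx : 2 ≤ x) :
    x ^ (-(5/4) : ℝ) ≤ 4 * ((x - 1) ^ (-(1/4) : ℝ) - x ^ (-(1/4) : ℝ)) := by
  have hx0 : 0 < x := by linarith
  have h1 : (0:ℝ) < 1 - 1/x := by
    have : 1/x ≤ 1/2 := by rw [div_le_div_iff₀ hx0 (by norm_num)]; linarith
    linarith
  -- Bernoulli: (1 - 1/x)^(1/4) ≤ 1 - 1/(4x)
  have key : (1 - 1/x) ^ ((1/4) : ℝ) ≤ 1 - 1/(4*x) := by
    have := rpow_one_add_le_one_add_mul_self (s := -(1/x)) (by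
      have : 1/x ≤ 1 := by rw [div_le_one hx0]; linarith
      linarith) (p := (1/4 : ℝ)) (by norm_num) (by norm_num)
    have h2 : 1 + -(1/x) = 1 - 1/x := by ring
    have h3 : 1 + (1/4 : ℝ) * -(1/x) = 1 - 1/(4*x) := by ring
    rw [h2, h3] at this
    exact this
  have hq0 : (0:ℝ) < (1 - 1/x) ^ ((1/4) : ℝ) := Real.rpow_pos_of_pos h1 _
  have hu : (0:ℝ) < 1/(4*x) ∧ 1/(4*x) < 1 := by
    constructor
    · positivity
    · rw [div_lt_one (by linarith)]; linarith
  -- invert: (1 - 1/x)^(-1/4) ≥ 1 + 1/(4x)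
  have hinv : 1 + 1/(4*x) ≤ (1 - 1/x) ^ ((-(1/4)) : ℝ) := by
    rw [show ((-(1/4)) : ℝ) = -(1/4 : ℝ) by norm_num, Real.rpow_neg h1.le]
    have h4 : (1 - 1/(4*x))⁻¹ ≤ ((1 - 1/x) ^ ((1/4) : ℝ))⁻¹ :=
      inv_anti₀ hq0 key
    have h5 : 1 + 1/(4*x) ≤ (1 - 1/(4*x))⁻¹ := by
      rw [← one_div, le_div_iff₀ (by linarith [hu.2])]
      nlinarith [hu.1, hu.2]
    exact h5.trans h4
  have hfac : x - 1 = x * (1 - 1/x) := by field_simp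
  have hmul : (x - 1) ^ ((-(1/4)) : ℝ) = x ^ ((-(1/4)) : ℝ) * (1 - 1/x) ^ ((-(1/4)) : ℝ) := by
    rw [hfac, Real.mul_rpow hx0.le h1.le]
  have hxc : 0 < x ^ ((-(1/4)) : ℝ) := Real.rpow_pos_of_pos hx0 _
  have hstep : x ^ ((-(1/4)) : ℝ) * (1 + 1/(4*x)) ≤ (x - 1) ^ ((-(1/4)) : ℝ) := by
    rw [hmul]
    exact mul_le_mul_of_nonneg_left hinv hxc.le
  have hexp : x ^ ((-(1/4)) : ℝ) * (1/(4*x)) = (1/4) * x ^ ((-(5/4)) : ℝ) := by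
    have : x ^ ((-(5/4)) : ℝ) = x ^ ((-(1/4)) : ℝ) * x ^ ((-1 : ℝ)) := by
      rw [← Real.rpow_add hx0]; norm_num
    rw [this, Real.rpow_neg_one]
    field_simp
  nlinarith [hstep, hexp]

set_option maxHeartbeats 1000000 in
/-- Quantum query complexity bound of Theorem 2 with explicit constants. -/
theorem quantum_bound_theorem2 (N : ℕ) (hN : 100 ≤ N)
    (δ : ℝ) (hδ0 : 0 < δ) (hδ1 : δ ≤ 1 / 4) (r : ℝ) (hr : r = δ - 2)
    (p : ℝ) (hp0 : 0 ≤ p) (hp1 : p ≤ 1)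
    (ε : ℝ) (hε : ε = 1 / 2)
    (α : ℝ) (hα : 1 / α = ∑ n ∈ Finset.Icc 1 N, (n : ℝ) ^ r)
    (T : ℝ)
    (hT : T ≤ Real.exp 2 * ∑ n ∈ Finset.Icc 1 N, (α * (n : ℝ) ^ r) *
        ((200 / (1 - ε)) * (1.04 + (n : ℝ) * p + Real.sqrt n) * Real.log (1 / ε))) :
    T ≤ 400 * Real.exp 2 * (9 + 1.04 * p * ((N : ℝ) ^ δ - 1) / δ) := by
  subst hε hr
  have hN1 : 1 ≤ N := by omega
  have hmem1 : (1:ℕ) ∈ Finset.Icc 1 N := by simp [hN1]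
  set S := ∑ n ∈ Finset.Icc 1 N, (n : ℝ) ^ (δ - 2) with hS
  have hS1 : 1 ≤ S := by
    have := Finset.single_le_sum (f := fun n : ℕ => (n:ℝ) ^ (δ - 2))
      (fun i _ => by positivity) hmem1
    simpa using this
  have hSpos : 0 < S := by linarith
  have hαval : α = 1 / S := by rw [← hα, one_div_one_div]
  set A := ∑ n ∈ Finset.Icc 1 N, (n : ℝ) ^ (δ - 1) with hAdef
  set B := ∑ n ∈ Finset.Icc 1 N, (n : ℝ) ^ (δ - 3/2) with hBdef
  have hA0 : 0 ≤ A := Finset.sum_nonneg fun i _ => by positivity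
  have hB0 : 0 ≤ B := Finset.sum_nonneg fun i _ => by positivity
  -- rewrite the sum
  have key : ∀ n ∈ Finset.Icc 1 N,
      (α * (n:ℝ) ^ (δ - 2)) *
        ((200 / (1 - (1/2:ℝ))) * (1.04 + (n:ℝ) * p + Real.sqrt n) * Real.log (1/(1/2:ℝ)))
      = (400 * Real.log 2 * α) *
          (1.04 * (n:ℝ) ^ (δ - 2) + p * (n:ℝ) ^ (δ - 1) + (n:ℝ) ^ (δ - 3/2)) := by
    intro n hn
    have hn1 : 1 ≤ n := (Finset.mem_Icc.mp hn).1
    have hn0 : (0:ℝ) < n := by exact_mod_cast hn1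
    have e1 : (n:ℝ) ^ (δ - 2) * n = (n:ℝ) ^ (δ - 1) := by
      rw [← Real.rpow_add_one hn0.ne' (δ - 2)]; ring_nf
    have e2 : (n:ℝ) ^ (δ - 2) * Real.sqrt n = (n:ℝ) ^ (δ - 3/2) := by
      rw [Real.sqrt_eq_rpow, ← Real.rpow_add hn0]; ring_nf
    have hl : Real.log (1/(1/2:ℝ)) = Real.log 2 := by norm_num
    rw [hl]
    linear_combination (400 * Real.log 2 * α * p) * e1 + (400 * Real.log 2 * α) * e2
  have hsum : (∑ n ∈ Finset.Icc 1 N, (α * (n:ℝ) ^ (δ - 2)) *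
        ((200 / (1 - (1/2:ℝ))) * (1.04 + (n:ℝ) * p + Real.sqrt n) * Real.log (1/(1/2:ℝ))))
      = (400 * Real.log 2 * α) * (1.04 * S + p * A + B) := by
    rw [Finset.sum_congr rfl key, ← Finset.mul_sum]
    congr 1
    rw [Finset.sum_add_distrib, Finset.sum_add_distrib, ← Finset.mul_sum, ← Finset.mul_sum]
  -- splitting off n = 1
  have hins : Finset.Icc 1 N = insert 1 (Finset.Icc 2 N) := by
    ext m; simp only [Finset.mem_Icc, Finset.mem_insert]; omega
  have hnotmem : (1:ℕ) ∉ Finset.Icc 2 N := by simp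
  have hcast : ∀ n ∈ Finset.Icc 2 N, ((n - 1 : ℕ) : ℝ) = (n:ℝ) - 1 := by
    intro n hn
    have : 2 ≤ n := (Finset.mem_Icc.mp hn).1
    push_cast [Nat.cast_sub (by omega : 1 ≤ n)]; ring
  have hNpos : (1:ℝ) ≤ (N:ℝ) := by exact_mod_cast hN1
  have hK0 : 0 ≤ ((N:ℝ) ^ δ - 1) / δ := by
    have : (1:ℝ) ^ δ ≤ (N:ℝ) ^ δ := Real.rpow_le_rpow (by norm_num) hNpos hδ0.le
    rw [Real.one_rpow] at this
    exact div_nonneg (by linarith) hδ0.le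
  -- bound A
  have hA : A ≤ 1 + ((N:ℝ) ^ δ - 1) / δ := by
    rw [hAdef, hins, Finset.sum_insert hnotmem]
    have h1 : ((1:ℕ):ℝ) ^ (δ - 1) = 1 := by norm_num
    rw [h1]
    have hpt : ∀ n ∈ Finset.Icc 2 N, (n:ℝ) ^ (δ - 1) ≤
        (fun m : ℕ => ((m:ℝ) ^ δ) / δ) n - (fun m : ℕ => ((m:ℝ) ^ δ) / δ) (n - 1) := by
      intro n hn
      have hn2 : 2 ≤ n := (Finset.mem_Icc.mp hn).1
      have hx : (2:ℝ) ≤ (n:ℝ) := by exact_mod_cast hn2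
      have := qb_concave hx hδ0 (by linarith)
      simp only [hcast n hn]
      rw [div_sub_div_same, le_div_iff₀ hδ0]
      linarith [this]
    have := Finset.sum_le_sum hpt
    rw [qb_telescope _ N hN1] at this
    simp only [Nat.cast_one, Real.one_rpow] at this
    have heq : ((N:ℝ) ^ δ - 1) / δ = (N:ℝ) ^ δ / δ - 1 / δ := by ring
    linarith
  -- bound B
  have hB : B ≤ 5 := by
    have hB1 : B ≤ ∑ n ∈ Finset.Icc 1 N, (n:ℝ) ^ (-(5/4) : ℝ) := by
      apply Finset.sum_le_sum
      intro n hn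
      have hn1 : 1 ≤ n := (Finset.mem_Icc.mp hn).1
      have : (1:ℝ) ≤ (n:ℝ) := by exact_mod_cast hn1
      exact Real.rpow_le_rpow_of_exponent_le this (by linarith)
    have hB2 : ∑ n ∈ Finset.Icc 1 N, (n:ℝ) ^ (-(5/4) : ℝ) ≤ 5 := by
      rw [hins, Finset.sum_insert hnotmem]
      have h1 : ((1:ℕ):ℝ) ^ (-(5/4) : ℝ) = 1 := by norm_num
      rw [h1]
      have hpt : ∀ n ∈ Finset.Icc 2 N, (n:ℝ) ^ (-(5/4) : ℝ) ≤
          (fun m : ℕ => -4 * (m:ℝ) ^ (-(1/4) : ℝ)) n -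
            (fun m : ℕ => -4 * (m:ℝ) ^ (-(1/4) : ℝ)) (n - 1) := by
        intro n hn
        have hn2 : 2 ≤ n := (Finset.mem_Icc.mp hn).1
        have hx : (2:ℝ) ≤ (n:ℝ) := by exact_mod_cast hn2
        have := qb_convex hx
        simp only [hcast n hn]
        linarith [this]
      have h2 := Finset.sum_le_sum hpt
      rw [qb_telescope _ N hN1] at h2
      have h3 : ((1:ℕ):ℝ) ^ (-(1/4) : ℝ) = 1 := by norm_num
      rw [h3] at h2
      have h4 : 0 ≤ (N:ℝ) ^ (-(1/4) : ℝ) := by positivity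
      nlinarith [h2, h4]
    linarith
  -- combine
  have hL0 : 0 < Real.log 2 := Real.log_pos (by norm_num)
  have hLlt : Real.log 2 < 0.6931471808 := Real.log_two_lt_d9
  have hexp2 : 0 < Real.exp 2 := Real.exp_pos 2
  have hα2 : α * (1.04 * S + p * A + B) = 1.04 + p * (A / S) + B / S := by
    rw [hαval]; field_simp
  have hAS : A / S ≤ A := div_le_self hA0 hS1
  have hBS : B / S ≤ B := div_le_self hB0 hS1
  have hAS0 : 0 ≤ A / S := by positivity
  have hBS0 : 0 ≤ B / S := by positivity
  set K := ((N:ℝ) ^ δ - 1) / δ with hKdef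
  have hstep : Real.log 2 * (1.04 + p * (A / S) + B / S) ≤ 9 + 1.04 * p * K := by
    have hpA : p * (A / S) ≤ p * (1 + K) := by
      apply mul_le_mul_of_nonneg_left _ hp0
      linarith [hAS.trans hA]
    have hBK : B / S ≤ 5 := hBS.trans hB
    have hpK : 0 ≤ p * K := mul_nonneg hp0 hK0
    nlinarith [mul_le_mul_of_nonneg_right hLlt.le hpK,
      mul_le_mul_of_nonneg_left hpA hL0.le,
      mul_le_mul_of_nonneg_left hBK hL0.le,
      mul_nonneg hp0 hK0, hp1, hp0]
  calc T ≤ Real.exp 2 * ((400 * Real.log 2 * α) * (1.04 * S + p * A + B)) := by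
        rw [← hsum]; exact hT
    _ = 400 * Real.exp 2 * (Real.log 2 * (1.04 + p * (A / S) + B / S)) := by
        rw [mul_assoc (400 * Real.log 2) α, hα2]; ring
    _ ≤ 400 * Real.exp 2 * (9 + 1.04 * p * K) := by
        apply mul_le_mul_of_nonneg_left hstep (by positivity)
    _ = 400 * Real.exp 2 * (9 + 1.04 * p * ((N:ℝ) ^ δ - 1) / δ) := by
        rw [hKdef]; ring
end

section
/- For any integer N ≥ 100, δ ∈ (0, 1/N], and q ∈ (0, 1], with p = (log N)^{-q}, one has 400 e^2 (9 + 1.04·p·(N^δ - 1)/δ) ≤ 4440 e^2 · (log N)^{1-q}. -/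
/-- Corollary 2: with noise level p = (log N)^{-q}, the quantum average-case
query complexity is O((log N)^{1-q}). -/
theorem corollary2_bound (N : ℕ) (hN : 100 ≤ N)
    (δ : ℝ) (hδ0 : 0 < δ) (hδ1 : δ ≤ 1 / N)
    (q : ℝ) (hq0 : 0 < q) (hq1 : q ≤ 1)
    (p : ℝ) (hp : p = (Real.log N) ^ (-q)) :
    400 * Real.exp 2 * (9 + 1.04 * p * ((N : ℝ) ^ δ - 1) / δ) ≤
      4440 * Real.exp 2 * (Real.log N) ^ (1 - q) := by
  have hNR : (100:ℝ) ≤ N := by exact_mod_cast hN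
  have hN0 : (0:ℝ) < N := by linarith
  set L := Real.log N with hLdef
  have hL1 : 1 < L := by
    rw [hLdef]
    rw [show (1:ℝ) = Real.log (Real.exp 1) by rw [Real.log_exp]]
    apply Real.log_lt_log (Real.exp_pos 1)
    have := Real.exp_one_lt_d9
    linarith
  have hLpos : 0 < L := by linarith
  -- sqrt bound
  have hsN : (0:ℝ) ≤ Real.sqrt N := Real.sqrt_nonneg _
  have hs : (10:ℝ) ≤ Real.sqrt N := by
    have h1 : Real.sqrt 100 ≤ Real.sqrt N := Real.sqrt_le_sqrt hNR
    have h100 : Real.sqrt 100 = 10 := by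
      rw [show (100:ℝ) = 10^2 by norm_num, Real.sqrt_sq (by norm_num : (0:ℝ) ≤ 10)]
    linarith
  have hss : Real.sqrt N * Real.sqrt N = N := Real.mul_self_sqrt hN0.le
  have hlogsq : L ≤ 2 * Real.sqrt N := by
    have h1 : Real.log (Real.sqrt N) ≤ Real.sqrt N - 1 :=
      Real.log_le_sub_one_of_pos (by positivity)
    have h2 : Real.log (Real.sqrt N) = L / 2 := by
      rw [Real.log_sqrt hN0.le]
    linarith
  have hδN : δ * N ≤ 1 := by
    rw [le_div_iff₀ hN0] at hδ1; linarith
  have hδL : δ * L ≤ 0.2 := by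
    nlinarith [mul_le_mul_of_nonneg_left hlogsq hδ0.le,
      mul_le_mul_of_nonneg_left hs (mul_nonneg hδ0.le hsN)]
  -- N^δ = exp (δ * L)
  have hNd : (N:ℝ)^δ = Real.exp (δ * L) := by
    rw [Real.rpow_def_of_pos hN0, mul_comm]
  have hexp02 : Real.exp 0.2 ≤ 1.23 := by
    have h5 : (Real.exp 0.2) ^ (5:ℕ) = Real.exp 1 := by
      rw [← Real.exp_nat_mul]; norm_num
    refine le_of_pow_le_pow_left₀ (n := 5) (by norm_num) (by norm_num) ?_
    rw [h5]
    nlinarith [Real.exp_one_lt_d9]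
  have hNd2 : (N:ℝ)^δ ≤ 1.23 := by
    rw [hNd]
    calc Real.exp (δ * L) ≤ Real.exp 0.2 := Real.exp_le_exp.2 hδL
    _ ≤ 1.23 := hexp02
  -- key: N^δ - 1 ≤ δ L N^δ
  have key : (N:ℝ)^δ - 1 ≤ δ * L * (N:ℝ)^δ := by
    rw [hNd]
    set t := δ * L with ht
    have h := Real.add_one_le_exp (-t)
    have he : Real.exp (-t) = (Real.exp t)⁻¹ := Real.exp_neg t
    have hpos : 0 < Real.exp t := Real.exp_pos t
    rw [he] at h
    have h2 := mul_le_mul_of_nonneg_right h hpos.le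
    have h3 : (Real.exp t)⁻¹ * Real.exp t = 1 := inv_mul_cancel₀ (ne_of_gt hpos)
    nlinarith
  have hdiv : ((N:ℝ)^δ - 1) / δ ≤ L * (N:ℝ)^δ := by
    rw [div_le_iff₀ hδ0]
    nlinarith [key]
  have hp0 : 0 < p := by
    rw [hp]; exact Real.rpow_pos_of_pos hLpos _
  have hpL : p * L = L ^ (1 - q) := by
    have h := (Real.rpow_add hLpos (-q) 1).symm
    rw [Real.rpow_one] at h
    rw [hp, show (1 - q) = -q + 1 by ring, ← h]
  have hLq1 : 1 ≤ L ^ (1 - q) := by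
    have := Real.rpow_le_rpow_of_exponent_le hL1.le (by linarith : (0:ℝ) ≤ 1 - q)
    rwa [Real.rpow_zero] at this
  have hmain : 9 + 1.04 * p * (((N:ℝ)^δ - 1) / δ) ≤ 11.1 * L ^ (1 - q) := by
    nlinarith [mul_le_mul_of_nonneg_left hdiv (by positivity : (0:ℝ) ≤ 1.04 * p),
      mul_le_mul_of_nonneg_left hNd2 (by positivity : (0:ℝ) ≤ 1.04 * (p * L)),
      hpL, hLq1, mul_pos hp0 hLpos]
  have he2 : 0 < Real.exp 2 := Real.exp_pos 2
  have hrw : 1.04 * p * ((N:ℝ)^δ - 1) / δ = 1.04 * p * (((N:ℝ)^δ - 1) / δ) := by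
    ring
  rw [hrw]
  calc 400 * Real.exp 2 * (9 + 1.04 * p * (((N:ℝ)^δ - 1) / δ))
      ≤ 400 * Real.exp 2 * (11.1 * L ^ (1 - q)) :=
        mul_le_mul_of_nonneg_left hmain (by positivity)
    _ = 4440 * Real.exp 2 * L ^ (1 - q) := by ring
end
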